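/- arXiv:1604.04733 — 6 statements merged into one kernel-verified Lean document; each statement's English description precedes it below -/
import Mathlib

section
/- For all b₁, b₂ ∈ F and c₁ ∈ F^×, if the quadratic form [b₁,b₂] ⊥ ⟨c₁⟩ is isotropic, then [b₁,b₂] ⊥ ⟨c₁⟩ ≃ ℍ ⊥ ⟨c₁⟩, where ℍ = [0,0] is the hyperbolic plane. -/
/-!
An isotropic vector `(x, y, z)` of `[b₁,b₂] ⊥ ⟨c₁⟩` either has `z = 0`, so that `[b₁,b₂]` itself
is isotropic and hence hyperbolic, or, after scaling to `z = 1`, gives a vector `e` with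
`[b₁,b₂](e) = c₁`. Completing `e` to a basis with polar pairing `1` rewrites `[b₁,b₂]` as
`[c₁, b]`, and the shear `z ↦ z + x` turns `[c₁, b] ⊥ ⟨c₁⟩` into `[0, b] ⊥ ⟨c₁⟩ ≃ ℍ ⊥ ⟨c₁⟩`.
-/

/-- The binary quadratic form `[b₁,b₂] : (x,y) ↦ b₁x² + xy + b₂y²` on `F × F`. -/
def binQF (F : Type*) [Field F] (b₁ b₂ : F) : QuadraticForm F (F × F) :=
  LinearMap.BilinMap.toQuadraticMap (LinearMap.mk₂ F
    (fun p q : F × F => b₁ * (p.1 * q.1) + p.1 * q.2 + b₂ * (p.2 * q.2))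
    (fun p p' q => by simp only [Prod.fst_add, Prod.snd_add]; ring)
    (fun a p q => by simp only [Prod.smul_fst, Prod.smul_snd, smul_eq_mul]; ring)
    (fun p q q' => by simp only [Prod.fst_add, Prod.snd_add]; ring)
    (fun a p q => by simp only [Prod.smul_fst, Prod.smul_snd, smul_eq_mul]; ring))

open QuadraticMap

lemma binQF_apply {F : Type*} [Field F] (b₁ b₂ : F) (v : F × F) :
    binQF F b₁ b₂ v = b₁ * (v.1 * v.1) + v.1 * v.2 + b₂ * (v.2 * v.2) := rfl

section CharTwo

variable {F : Type*} [Field F] [CharP F 2]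

/-- The change of basis sending the standard basis to `e = (p, r)`, `f = (q, s)`; in
characteristic 2 its determinant is the polar pairing `p * s + q * r` of `[b₁,b₂]`. -/
def linearEquivOfPolarEqOne (p q r s : F) (h : p * s + q * r = 1) : (F × F) ≃ₗ[F] (F × F) where
  toFun v := (p * v.1 + q * v.2, r * v.1 + s * v.2)
  invFun v := (s * v.1 + q * v.2, r * v.1 + p * v.2)
  map_add' v w := by simp only [Prod.fst_add, Prod.snd_add, Prod.mk_add_mk]; ring_nf
  map_smul' a v := by
    simp only [Prod.smul_fst, Prod.smul_snd, smul_eq_mul, RingHom.id_apply, Prod.smul_mk]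
    ring_nf
  left_inv v := by
    have h2 : (2 : F) = 0 := CharTwo.two_eq_zero
    ext
    · linear_combination (norm := ring_nf) v.1 * h + q * s * v.2 * h2
    · linear_combination (norm := ring_nf) v.2 * h + p * r * v.1 * h2
  right_inv v := by
    have h2 : (2 : F) = 0 := CharTwo.two_eq_zero
    ext
    · linear_combination (norm := ring_nf) v.1 * h + p * q * v.2 * h2
    · linear_combination (norm := ring_nf) v.2 * h + r * s * v.1 * h2

lemma binQF_equivalent_of_polar_eq_one (b₁ b₂ p q r s : F) (h : p * s + q * r = 1) :
    (binQF F (binQF F b₁ b₂ (p, r)) (binQF F b₁ b₂ (q, s))).Equivalent (binQF F b₁ b₂) := by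
  have h2 : (2 : F) = 0 := CharTwo.two_eq_zero
  refine ⟨{ toLinearEquiv := linearEquivOfPolarEqOne p q r s h, map_app' := fun v => ?_ }⟩
  simp only [linearEquivOfPolarEqOne, binQF_apply]
  linear_combination (v.1 * v.2) * h + (b₁ * p * q + b₂ * r * s) * v.1 * v.2 * h2

lemma exists_binQF_equivalent_of_ne_zero (b₁ b₂ : F) {e : F × F} (he : e ≠ 0) :
    ∃ b, (binQF F (binQF F b₁ b₂ e) b).Equivalent (binQF F b₁ b₂) := by
  obtain ⟨p, r⟩ := e
  by_cases hr : r = 0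
  · subst hr
    have hp : p ≠ 0 := fun hp => he (by simp [hp])
    exact ⟨_, binQF_equivalent_of_polar_eq_one b₁ b₂ p 0 0 p⁻¹ (by field_simp; ring)⟩
  · exact ⟨_, binQF_equivalent_of_polar_eq_one b₁ b₂ p r⁻¹ r 0 (by field_simp; ring)⟩

lemma binQF_zero_left_equivalent_hyperbolic (b : F) :
    (binQF F 0 b).Equivalent (binQF F 0 0) := by
  have h2 : (2 : F) = 0 := CharTwo.two_eq_zero
  have key := binQF_equivalent_of_polar_eq_one (0 : F) 0 1 b 0 1 (by ring)
  simp only [binQF_apply, zero_mul, mul_zero, zero_add, add_zero, mul_one] at key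
  exact key

lemma binQF_equivalent_hyperbolic_of_isotropic (b₁ b₂ : F) {e : F × F} (he : e ≠ 0)
    (hiso : binQF F b₁ b₂ e = 0) : (binQF F b₁ b₂).Equivalent (binQF F 0 0) := by
  obtain ⟨b, hb⟩ := exists_binQF_equivalent_of_ne_zero b₁ b₂ he
  rw [hiso] at hb
  exact hb.symm.trans (binQF_zero_left_equivalent_hyperbolic b)

lemma binQF_prod_smul_sq_equivalent_binQF_zero_left (b c : F) :
    ((binQF F c b).prod (c • (sq : QuadraticForm F F))).Equivalent
      ((binQF F 0 b).prod (c • (sq : QuadraticForm F F))) := by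
  have h2 : (2 : F) = 0 := CharTwo.two_eq_zero
  refine ⟨⟨(LinearEquiv.refl F (F × F)).skewProd (LinearEquiv.refl F F) (LinearMap.fst F F F),
    fun v => ?_⟩⟩
  simp only [AddHom.toFun_eq_coe, LinearMap.coe_toAddHom, LinearEquiv.coe_coe,
    LinearEquiv.skewProd_apply, LinearEquiv.refl_apply, LinearMap.fst_apply, prod_apply,
    binQF_apply, smul_apply, sq_apply, smul_eq_mul]
  linear_combination c * v.2 * v.1.1 * h2

end CharTwo

/-- over a field of characteristic 2, for `c₁ ≠ 0`, if
`[b₁,b₂] ⊥ ⟨c₁⟩` is isotropic then `[b₁,b₂] ⊥ ⟨c₁⟩ ≃ ℍ ⊥ ⟨c₁⟩`. -/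
theorem stmt4 (F : Type*) [Field F] [CharP F 2] (b₁ b₂ c₁ : F) (hc₁ : c₁ ≠ 0)
    (hiso : ∃ v : (F × F) × F, v ≠ 0 ∧
      ((binQF F b₁ b₂).prod (c₁ • (QuadraticMap.sq : QuadraticForm F F))) v = 0) :
    QuadraticMap.Equivalent
      ((binQF F b₁ b₂).prod (c₁ • (QuadraticMap.sq : QuadraticForm F F)))
      ((binQF F 0 0).prod (c₁ • (QuadraticMap.sq : QuadraticForm F F))) := by
  obtain ⟨⟨e, z⟩, hv, heq⟩ := hiso
  simp only [prod_apply, smul_apply, sq_apply, smul_eq_mul] at heq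
  have hsq := Equivalent.refl (c₁ • (sq : QuadraticForm F F))
  by_cases hz : z = 0
  · subst hz
    have he : e ≠ 0 := fun he => hv (by simp [he])
    exact (binQF_equivalent_hyperbolic_of_isotropic b₁ b₂ he (by simpa using heq)).prod hsq
  · have hQe : binQF F b₁ b₂ (z⁻¹ • e) = c₁ := by
      rw [QuadraticMap.map_smul, smul_eq_mul, eq_neg_of_add_eq_zero_left heq, CharTwo.neg_eq]
      field_simp
    have he : z⁻¹ • e ≠ 0 := fun he => hc₁ (by rw [← hQe, he, map_zero])
    obtain ⟨b, hb⟩ := exists_binQF_equivalent_of_ne_zero b₁ b₂ he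
    rw [hQe] at hb
    exact (hb.symm.prod hsq).trans <|
      (binQF_prod_smul_sq_equivalent_binQF_zero_left b c₁).trans <|
        (binQF_zero_left_equivalent_hyperbolic b).prod hsq
end

section
/- Let b₁, b₂, c₁, c₂ ∈ F and d ∈ F^× be such that [b₁,b₂] ⊥ ⟨d⟩ ≃ [c₁,c₂] ⊥ ⟨d⟩. Then for every d' ∈ F there exists d'' ∈ F such that [b₁,b₂] ⊥ d·[1,d'] ≃ [c₁,c₂] ⊥ d·[1,d'']. -/
section Aux
variable {F : Type*} [Field F]

lemma binQF_apply_s5 (b₁ b₂ : F) (p : F × F) :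
    binQF F b₁ b₂ p = b₁ * (p.1 * p.1) + p.1 * p.2 + b₂ * (p.2 * p.2) := by
  simp [binQF, LinearMap.BilinMap.toQuadraticMap_apply, LinearMap.mk₂_apply]

lemma prodBin_apply (b₁ b₂ d d' : F) (w : (F × F) × (F × F)) :
    ((binQF F b₁ b₂).prod (d • binQF F 1 d')) w
      = b₁ * (w.1.1 * w.1.1) + w.1.1 * w.1.2 + b₂ * (w.1.2 * w.1.2)
        + d * (w.2.1 * w.2.1 + w.2.1 * w.2.2 + d' * (w.2.2 * w.2.2)) := by
  simp [binQF_apply_s5, QuadraticMap.prod_apply, QuadraticMap.smul_apply, smul_eq_mul]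

lemma prodSq_apply (c₁ c₂ d : F) (z : (F × F) × F) :
    ((binQF F c₁ c₂).prod (d • (QuadraticMap.sq : QuadraticForm F F))) z
      = c₁ * (z.1.1 * z.1.1) + z.1.1 * z.1.2 + c₂ * (z.1.2 * z.1.2) + d * (z.2 * z.2) := by
  simp [binQF_apply_s5, QuadraticMap.prod_apply, QuadraticMap.smul_apply, smul_eq_mul]

variable [CharP F 2]

lemma two_eq_zero' : (2 : F) = 0 := by
  exact_mod_cast CharP.cast_eq_zero F 2

lemma polar_prodBin (b₁ b₂ d d' : F) (v w : (F × F) × (F × F)) :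
    QuadraticMap.polar ((binQF F b₁ b₂).prod (d • binQF F 1 d')) v w
      = (v.1.1 * w.1.2 + v.1.2 * w.1.1) + d * (v.2.1 * w.2.2 + v.2.2 * w.2.1) := by
  simp only [QuadraticMap.polar, prodBin_apply, Prod.fst_add, Prod.snd_add]
  linear_combination (b₁ * v.1.1 * w.1.1 + b₂ * v.1.2 * w.1.2 + d * v.2.1 * w.2.1
    + d * d' * v.2.2 * w.2.2) * (two_eq_zero' (F := F))

lemma polar_prodSq (c₁ c₂ d : F) (v w : (F × F) × F) :
    QuadraticMap.polar ((binQF F c₁ c₂).prod (d • (QuadraticMap.sq : QuadraticForm F F))) v w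
      = v.1.1 * w.1.2 + v.1.2 * w.1.1 := by
  simp only [QuadraticMap.polar, prodSq_apply, Prod.fst_add, Prod.snd_add]
  linear_combination (c₁ * v.1.1 * w.1.1 + c₂ * v.1.2 * w.1.2 + d * v.2 * w.2)
    * (two_eq_zero' (F := F))

end Aux

/-- over a field of characteristic 2, if
`[b₁,b₂] ⊥ ⟨d⟩ ≃ [c₁,c₂] ⊥ ⟨d⟩` with `d ≠ 0`, then for every `d'` there exists `d''`
with `[b₁,b₂] ⊥ d·[1,d'] ≃ [c₁,c₂] ⊥ d·[1,d'']`. -/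
theorem stmt5 (F : Type*) [Field F] [CharP F 2] (b₁ b₂ c₁ c₂ : F) (d : F) (hd : d ≠ 0)
    (h : QuadraticMap.Equivalent
      ((binQF F b₁ b₂).prod (d • (QuadraticMap.sq : QuadraticForm F F)))
      ((binQF F c₁ c₂).prod (d • (QuadraticMap.sq : QuadraticForm F F)))) :
    ∀ d' : F, ∃ d'' : F,
      QuadraticMap.Equivalent
        ((binQF F b₁ b₂).prod (d • binQF F 1 d'))
        ((binQF F c₁ c₂).prod (d • binQF F 1 d'')) := by
  intro d'
  obtain ⟨σ⟩ := h
  set Q3b := (binQF F b₁ b₂).prod (d • (QuadraticMap.sq : QuadraticForm F F)) with hQ3b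
  set Q3c := (binQF F c₁ c₂).prod (d • (QuadraticMap.sq : QuadraticForm F F)) with hQ3c
  set Q4 := (binQF F b₁ b₂).prod (d • binQF F 1 d') with hQ4
  -- the inverse isometry, as a linear equivalence
  let T : ((F × F) × F) ≃ₗ[F] ((F × F) × F) := σ.toLinearEquiv.symm
  have hT : ∀ z, Q3b (T z) = Q3c z := by
    intro z
    have h1 := σ.map_app (T z)
    have h3 : σ (T z) = z := by
      show σ.toLinearEquiv (σ.toLinearEquiv.symm z) = z
      exact σ.toLinearEquiv.apply_symm_apply z
    rw [h3] at h1
    exact h1.symm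
  -- the embedding j
  let j : ((F × F) × F) →ₗ[F] ((F × F) × (F × F)) :=
    (LinearMap.id.prodMap (LinearMap.inl F F F)) ∘ₗ T.toLinearMap
  have hjapp : ∀ z, j z = ((T z).1, ((T z).2, 0)) := fun z => rfl
  have hjval : ∀ z, Q4 (j z) = Q3c z := by
    intro z
    rw [← hT z, hjapp, hQ4, hQ3b, prodBin_apply, prodSq_apply]
    ring
  have hjpolar : ∀ z z', QuadraticMap.polar Q4 (j z) (j z') = QuadraticMap.polar Q3c z z' := by
    intro z z'
    unfold QuadraticMap.polar
    rw [← map_add j, hjval, hjval, hjval]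
  -- the lift map
  let lift : ((F × F) × F) →ₗ[F] ((F × F) × (F × F)) :=
    LinearMap.id.prodMap (LinearMap.inr F F F)
  have hliftapp : ∀ z, lift z = (z.1, (0, z.2)) := fun z => rfl
  -- the linear system for f
  let P : ((F × F) × (F × F)) → ((F × F) × F) →ₗ[F] F := fun w =>
    (Q4.polarBilin w) ∘ₗ lift
  let Lmap : ((F × F) × F) →ₗ[F] ((F × F) × F) :=
    ((P (j ((1, 0), 0))).prod (P (j ((0, 1), 0)))).prod (P (j ((0, 0), 1)))
  have hLapp : ∀ z, Lmap z =
      ((QuadraticMap.polar Q4 (j ((1, 0), 0)) (lift z),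
        QuadraticMap.polar Q4 (j ((0, 1), 0)) (lift z)),
        QuadraticMap.polar Q4 (j ((0, 0), 1)) (lift z)) := fun z => rfl
  have hLinj : Function.Injective Lmap := by
    rw [← LinearMap.ker_eq_bot]
    apply LinearMap.ker_eq_bot'.mpr
    rintro ⟨⟨v11, v12⟩, v2⟩ hv
    rw [hLapp] at hv
    simp only [Prod.ext_iff, Prod.fst_zero, Prod.snd_zero] at hv
    obtain ⟨⟨h1, h2⟩, h3⟩ := hv
    rw [hjapp, hliftapp, polar_prodBin] at h1 h2 h3
    have hkey : ∀ y : (F × F) × F, y.1.1 * v12 + y.1.2 * v11 + d * (y.2 * v2) = 0 := by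
      intro y
      obtain ⟨z, rfl⟩ : ∃ z, T z = y := ⟨T.symm y, T.apply_symm_apply y⟩
      have hdec : T z = z.1.1 • T ((1, 0), 0) + z.1.2 • T ((0, 1), 0) + z.2 • T ((0, 0), 1) := by
        rw [← map_smul, ← map_smul, ← map_smul, ← map_add, ← map_add]
        congr 1
        ext <;> simp
      rw [hdec]
      simp only [Prod.fst_add, Prod.snd_add, Prod.smul_fst, Prod.smul_snd, smul_eq_mul]
      linear_combination z.1.1 * h1 + z.1.2 * h2 + z.2 * h3
    have e1 := hkey ((1, 0), 0)
    have e2 := hkey ((0, 1), 0)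
    have e3 := hkey ((0, 0), 1)
    simp only [mul_zero, zero_mul, one_mul, mul_one, add_zero, zero_add] at e1 e2 e3
    have hv2 : v2 = 0 := by
      rcases mul_eq_zero.mp e3 with hh | hh
      · exact absurd hh hd
      · exact hh
    simp [Prod.ext_iff, e1, e2, hv2]
  have hLsurj := LinearMap.injective_iff_surjective.mp hLinj
  obtain ⟨v, hfv⟩ := hLsurj ((0, 0), d)
  rw [hLapp] at hfv
  simp only [Prod.mk.injEq] at hfv
  obtain ⟨⟨hfa, hfb⟩, hfe⟩ := hfv
  -- the isometry Φ
  let pi1 : ((F × F) × (F × F)) →ₗ[F] ((F × F) × F) :=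
    LinearMap.id.prodMap (LinearMap.fst F F F)
  let ell : ((F × F) × (F × F)) →ₗ[F] F :=
    (LinearMap.snd F F F) ∘ₗ (LinearMap.snd F (F × F) (F × F))
  let Φ : ((F × F) × (F × F)) →ₗ[F] ((F × F) × (F × F)) := (j ∘ₗ pi1) + ell.smulRight (lift v)
  have hΦapp : ∀ w : (F × F) × (F × F), Φ w = j (w.1, w.2.1) + w.2.2 • lift v := fun w => rfl
  have hsplit : ∀ (u : F × F) (x : F),
      ((u, x) : (F × F) × F)
        = u.1 • (((1 : F), (0 : F)), (0 : F)) + u.2 • (((0 : F), (1 : F)), (0 : F))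
          + x • (((0 : F), (0 : F)), (1 : F)) := by
    intro u x
    ext <;> simp
  have hpolarjf : ∀ (u : F × F) (x : F),
      QuadraticMap.polar Q4 (j (u, x)) (lift v) = x * d := by
    intro u x
    rw [hsplit u x, map_add, map_add, map_smul, map_smul, map_smul,
      QuadraticMap.polar_add_left, QuadraticMap.polar_add_left,
      QuadraticMap.polar_smul_left, QuadraticMap.polar_smul_left, QuadraticMap.polar_smul_left,
      hfa, hfb, hfe]
    simp only [smul_eq_mul, mul_zero, smul_zero, zero_add, add_zero]
  have hQadd : ∀ x y : (F × F) × (F × F), Q4 (x + y) = Q4 x + Q4 y + QuadraticMap.polar Q4 x y := by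
    intro x y
    unfold QuadraticMap.polar
    ring
  obtain ⟨ε, hε⟩ : ∃ e, Q4 (lift v) = e := ⟨_, rfl⟩
  refine ⟨ε / d, ?_⟩
  have hΦval : ∀ w : (F × F) × (F × F),
      Q4 (Φ w) = ((binQF F c₁ c₂).prod (d • binQF F 1 (ε / d))) w := by
    intro w
    rw [hΦapp, hQadd, QuadraticMap.polar_smul_right, QuadraticMap.map_smul, hε,
      hpolarjf w.1 w.2.1, hjval, hQ3c, prodSq_apply, prodBin_apply]
    simp only [smul_eq_mul]
    field_simp
    ring
  have hΦinj : Function.Injective Φ := by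
    rw [← LinearMap.ker_eq_bot]
    apply LinearMap.ker_eq_bot'.mpr
    rintro ⟨⟨u1, u2⟩, x, y⟩ hw
    rw [hΦapp] at hw
    have pair : ∀ g : (F × F) × (F × F),
        QuadraticMap.polar Q4 (j ((u1, u2), x) + y • lift v) g = 0 := by
      intro g
      rw [hw, QuadraticMap.polar_zero_left]
    have pa := pair (j ((1, 0), 0))
    have pb := pair (j ((0, 1), 0))
    have pe := pair (j ((0, 0), 1))
    have pf := pair (lift v)
    rw [QuadraticMap.polar_add_left, QuadraticMap.polar_smul_left, hjpolar,
      QuadraticMap.polar_comm _ (lift v) (j (((1 : F), (0 : F)), (0 : F))), hfa,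
      hQ3c, polar_prodSq] at pa
    rw [QuadraticMap.polar_add_left, QuadraticMap.polar_smul_left, hjpolar,
      QuadraticMap.polar_comm _ (lift v) (j (((0 : F), (1 : F)), (0 : F))), hfb,
      hQ3c, polar_prodSq] at pb
    rw [QuadraticMap.polar_add_left, QuadraticMap.polar_smul_left, hjpolar,
      QuadraticMap.polar_comm _ (lift v) (j (((0 : F), (0 : F)), (1 : F))), hfe,
      hQ3c, polar_prodSq] at pe
    rw [QuadraticMap.polar_add_left, QuadraticMap.polar_smul_left, hpolarjf] at pf
    simp only [mul_zero, zero_mul, one_mul, mul_one, add_zero, zero_add, smul_eq_mul,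
      smul_zero] at pa pb pe
    -- pa : u2 = 0, pb : u1 = 0, pe : y * d = 0
    have hy : y = 0 := by
      rcases mul_eq_zero.mp pe with hh | hh
      · exact hh
      · exact absurd hh hd
    have hx : x = 0 := by
      rw [hy] at pf
      simp only [zero_smul, smul_eq_mul, zero_mul, add_zero] at pf
      rcases mul_eq_zero.mp pf with hh | hh
      · exact hh
      · exact absurd hh hd
    simp [Prod.ext_iff, pa, pb, hx, hy]
  have hΦsurj := LinearMap.injective_iff_surjective.mp hΦinj
  exact ⟨(QuadraticMap.IsometryEquiv.mk (LinearEquiv.ofBijective Φ ⟨hΦinj, hΦsurj⟩)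
    (fun w => hΦval w)).symm⟩
end

section
/- Let ρ be a nonsingular quadratic form of dimension n over F and let λ, μ ∈ F^×. Then there is an isometry (ρ ⊥ λ·ρ) ⊥ (ρ ⊥ μ·ρ) ⊥ n×ℍ ≃ (ρ ⊥ (λμ)·ρ) ⊥ (ρ ⊥ λ·ρ ⊥ μ·ρ ⊥ (λμ)·ρ). (This expresses the identity ⟨⟨λ⟩⟩⊗ρ + ⟨⟨μ⟩⟩⊗ρ = ⟨⟨λμ⟩⟩⊗ρ + ⟨⟨λ,μ⟩⟩⊗ρ in the Witt group of nonsingular quadratic forms, i.e. the congruence ⟨⟨λ⟩⟩⊗ρ ⊥ ⟨⟨μ⟩⟩⊗ρ ≡ ⟨⟨λμ⟩⟩⊗ρ mod I_q^{m+2}(F) when ρ lies in I_q^m(F).) -/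
open QuadraticMap QuadraticForm Module

section

variable {F : Type*} [Field F]

@[simp]
lemma binQF_zero_zero_apply (z : F × F) : binQF F 0 0 z = z.1 * z.2 := by
  simp [binQF, LinearMap.BilinMap.toQuadraticMap_apply]

lemma LinearMap.Nondegenerate.smul {M₁ M₂ M : Type*} [AddCommGroup M₁] [Module F M₁]
    [AddCommGroup M₂] [Module F M₂] [AddCommGroup M] [Module F M] {B : M₁ →ₗ[F] M₂ →ₗ[F] M}
    (hB : B.Nondegenerate) {c : F} (hc : c ≠ 0) : (c • B).Nondegenerate :=
  ⟨fun x hx => hB.1 x fun y => (smul_eq_zero.1 (hx y)).resolve_left hc,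
    fun y hy => hB.2 y fun x => (smul_eq_zero.1 (hy x)).resolve_left hc⟩

lemma QuadraticMap.polarBilin_smul {V : Type*} [AddCommGroup V] [Module F V]
    (c : F) (Q : QuadraticForm F V) : polarBilin (c • Q) = c • polarBilin Q := by
  ext x y
  simp [polar_smul]

def LinearEquiv.prodPiEquivPiProd (R ι M N : Type*) [Semiring R] [AddCommMonoid M] [Module R M]
    [AddCommMonoid N] [Module R N] : ((ι → M) × (ι → N)) ≃ₗ[R] (ι → M × N) :=
  { (Equiv.arrowProdEquivProdArrow ι (fun _ => M) (fun _ => N)).symm with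
    map_add' := fun _ _ => rfl
    map_smul' := fun _ _ => rfl }

noncomputable def QuadraticForm.dualProdIsometryEquivPiBinQF {M ι : Type*} [AddCommGroup M]
    [Module F M] [Fintype ι] [DecidableEq ι] (b : Basis ι F M) :
    (dualProd F M).IsometryEquiv (pi fun _ : ι => binQF F 0 0) where
  toLinearEquiv := (b.dualBasis.equivFun.prodCongr b.equivFun).trans
    (LinearEquiv.prodPiEquivPiProd F ι F F)
  map_app' z := by
    have h : ∑ i, z.1 (b i) * b.repr z.2 i = z.1 z.2 := by
      conv_rhs => rw [← b.sum_dual_apply_smul_coord z.1]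
      simp only [LinearMap.coe_sum, LinearMap.coe_smul, Finset.sum_apply, Pi.smul_apply,
        Basis.coord_apply, smul_eq_mul]
    simpa [LinearEquiv.prodPiEquivPiProd, pi_apply] using h

lemma CharTwo.polar_add_left_add_apply_add_left {V : Type*} [AddCommGroup V] [Module F V]
    [CharP F 2] (Q : QuadraticForm F V) (x y : V) : polar Q (x + y) y + Q (x + y) = Q x + Q y := by
  have hyy : y + y = 0 := by rw [← two_smul F y, CharTwo.two_eq_zero, zero_smul]
  rw [QuadraticMap.polar, add_assoc, hyy, add_zero]
  linear_combination (-Q y) * CharTwo.two_eq_zero (R := F)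

lemma QuadraticForm.equivalent_prod_self_dualProd {V : Type*} [AddCommGroup V] [Module F V]
    [FiniteDimensional F V] [CharP F 2] (Q : QuadraticForm F V)
    (hQ : (polarBilin Q).Nondegenerate) : (Q.prod Q).Equivalent (dualProd F V) := by
  obtain ⟨B, hB⟩ := LinearMap.BilinMap.toQuadraticMap_surjective Q
  let φ : V × V →ₗ[F] Dual F V × V :=
    ((polarBilin Q).flip ∘ₗ LinearMap.snd F V V
      + B.flip ∘ₗ (LinearMap.fst F V V + LinearMap.snd F V V)).prod
      (LinearMap.fst F V V + LinearMap.snd F V V)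
  have hφ : ∀ z, dualProd F V (φ z) = (Q.prod Q) z := fun ⟨x, y⟩ => by
    have hB' : B (x + y) (x + y) = Q (x + y) := by rw [← hB]; rfl
    change polar Q (x + y) y + B (x + y) (x + y) = Q x + Q y
    rw [hB', CharTwo.polar_add_left_add_apply_add_left]
  have hφ_inj : Function.Injective φ := by
    rw [← LinearMap.ker_eq_bot, LinearMap.ker_eq_bot']
    rintro ⟨x, y⟩ h
    obtain ⟨h₁, h₂ : x + y = 0⟩ := Prod.ext_iff.1 h
    have hy : y = 0 := hQ.2 y fun u => by simpa [φ, h₂] using LinearMap.congr_fun h₁ u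
    rw [hy, add_zero] at h₂
    rw [h₂, hy, Prod.mk_zero_zero]
  have hdim : finrank F (V × V) = finrank F (Dual F V × V) := by
    simp [Module.finrank_prod, Subspace.dual_finrank_eq]
  exact ⟨⟨φ.linearEquivOfInjective hφ_inj hdim, hφ⟩⟩

lemma QuadraticForm.equivalent_prod_self_pi_binQF {V : Type*} [AddCommGroup V] [Module F V]
    [FiniteDimensional F V] [CharP F 2] {n : ℕ} (hdim : finrank F V = n) (Q : QuadraticForm F V)
    (hQ : (polarBilin Q).Nondegenerate) :
    (Q.prod Q).Equivalent (pi fun _ : Fin n => binQF F 0 0) :=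
  (equivalent_prod_self_dualProd Q hQ).trans
    ⟨dualProdIsometryEquivPiBinQF (finBasisOfFinrankEq F V hdim)⟩

section Regroup

variable {M₁ M₂ M₃ M₄ M₅ M₆ : Type*} [AddCommGroup M₁] [Module F M₁] [AddCommGroup M₂]
  [Module F M₂] [AddCommGroup M₃] [Module F M₃] [AddCommGroup M₄] [Module F M₄]
  [AddCommGroup M₅] [Module F M₅] [AddCommGroup M₆] [Module F M₆]
  (Q₁ : QuadraticForm F M₁) (Q₂ : QuadraticForm F M₂) (Q₃ : QuadraticForm F M₃)
  (Q₄ : QuadraticForm F M₄) (Q₅ : QuadraticForm F M₅) (Q₆ : QuadraticForm F M₆)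

lemma QuadraticForm.equivalent_prod_regroup₁ :
    ((Q₁.prod Q₂).prod ((Q₃.prod Q₄).prod Q₅)).Equivalent
      (((Q₁.prod Q₃).prod Q₅).prod (Q₂.prod Q₄)) :=
  ⟨{ toFun z := (((z.1.1, z.2.1.1), z.2.2), (z.1.2, z.2.1.2))
     invFun z := ((z.1.1.1, z.2.1), ((z.1.1.2, z.2.2), z.1.2))
     map_add' _ _ := rfl
     map_smul' _ _ := rfl
     left_inv _ := rfl
     right_inv _ := rfl
     map_app' _ := by simp only [prod_apply]; abel }⟩

lemma QuadraticForm.equivalent_prod_regroup₂ :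
    ((Q₁.prod Q₅).prod ((Q₃.prod Q₂).prod (Q₄.prod Q₆))).Equivalent
      (((Q₁.prod Q₃).prod (Q₅.prod Q₆)).prod (Q₂.prod Q₄)) :=
  ⟨{ toFun z := (((z.1.1, z.2.1.1), (z.1.2, z.2.2.2)), (z.2.1.2, z.2.2.1))
     invFun z := ((z.1.1.1, z.1.2.1), ((z.1.1.2, z.2.1), (z.2.2, z.1.2.2)))
     map_add' _ _ := rfl
     map_smul' _ _ := rfl
     left_inv _ := rfl
     right_inv _ := rfl
     map_app' _ := by simp only [prod_apply]; abel }⟩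

end Regroup

end

/-- over a field of characteristic 2, if `ρ` is a nonsingular quadratic form
(i.e. its polar bilinear form is nondegenerate) of dimension `n`, and `λ, μ ∈ F^×`, then
`(ρ ⊥ λ·ρ) ⊥ (ρ ⊥ μ·ρ) ⊥ n×ℍ ≃ (ρ ⊥ (λμ)·ρ) ⊥ (ρ ⊥ λ·ρ ⊥ μ·ρ ⊥ (λμ)·ρ)`. -/
theorem stmt6 (F : Type*) [Field F] [CharP F 2]
    (V : Type*) [AddCommGroup V] [Module F V] [FiniteDimensional F V] (n : ℕ)
    (hdim : Module.finrank F V = n)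
    (ρ : QuadraticForm F V) (hρ : (QuadraticMap.polarBilin ρ).Nondegenerate)
    (l m : F) (hl : l ≠ 0) (hm : m ≠ 0) :
    QuadraticMap.Equivalent
      ((ρ.prod (l • ρ)).prod ((ρ.prod (m • ρ)).prod
        (QuadraticMap.pi (fun _ : Fin n => binQF F 0 0))))
      ((ρ.prod ((l * m) • ρ)).prod
        ((ρ.prod (l • ρ)).prod ((m • ρ).prod ((l * m) • ρ)))) := by
  have hlm : (polarBilin ((l * m) • ρ)).Nondegenerate := by
    rw [polarBilin_smul]
    exact hρ.smul (mul_ne_zero hl hm)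
  have hhyp := equivalent_prod_self_pi_binQF hdim _ hlm
  exact (equivalent_prod_regroup₁ _ _ _ _ _).trans <|
    (((Equivalent.refl _).prod hhyp.symm).prod (Equivalent.refl _)).trans
      (equivalent_prod_regroup₂ _ _ _ _ _ _).symm
end

section
/- Let (1, u, v, w) be a quaternion basis of type [a,b) in an F-algebra A, and let λ, μ ∈ F be such that t := λ²b + λμb + μ²ab ≠ 0. Set u' = u + λv + μw and v' = λv + μw. Then u'² + u' = (a + t)·1, v'² = t·1, and u'v' = v'(1 + u'); in particular (1, u', v', u'v') is again a quaternion basis of the quaternion algebra spanned by (1, u, v, w). -/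
/-!
Put `x := λv + μw`, so that `u' = u + x` and `v' = x`. Every element of the span of `v` and
`w = uv` satisfies `u x = x (1 + u)`, and the multiplication table of `v, w` gives `x² = t`.
In characteristic `2` these two relations alone imply `(u + x)² + (u + x) = a + t` and
`(u + x) x = x (1 + u + x)`. The coordinates of `1, u', v', u'v'` in the basis `1, u, v, w` form a
matrix of determinant `λ² + λμ + μ²a = t / b ≠ 0`, so both families span the same subspace and the
new one is linearly independent as well.
-/

open Set Matrix Submodule

theorem Submodule.span_range_sum_smul_of_isUnit {R M ι : Type*} [CommRing R] [AddCommGroup M]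
    [Module R M] [Fintype ι] [DecidableEq ι] (e : ι → M) {P : Matrix ι ι R} (hP : IsUnit P) :
    span R (range fun i ↦ ∑ j, P i j • e j) = span R (range e) := by
  have hcomp : Fintype.linearCombination R (fun i ↦ ∑ j, P i j • e j) =
      Fintype.linearCombination R e ∘ₗ P.vecMulLinear := by
    ext x
    simp only [Fintype.linearCombination_apply, LinearMap.coe_comp, Function.comp_apply,
      coe_vecMulLinear, vecMul, dotProduct, Finset.smul_sum, Finset.sum_smul, smul_smul]
    exact Finset.sum_comm
  rw [← Fintype.range_linearCombination, ← Fintype.range_linearCombination, hcomp,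
    LinearMap.range_comp, LinearMap.range_eq_top.2 (vecMul_surjective_iff_isUnit.2 hP),
    Submodule.map_top]

theorem LinearIndependent.sum_smul_of_isUnit {R M ι : Type*} [CommRing R] [Nontrivial R]
    [AddCommGroup M] [Module R M] [Fintype ι] [DecidableEq ι] {e : ι → M}
    (he : LinearIndependent R e) {P : Matrix ι ι R} (hP : IsUnit P) :
    LinearIndependent R fun i ↦ ∑ j, P i j • e j := by
  rw [linearIndependent_iff_card_eq_finrank_span, Set.finrank, span_range_sum_smul_of_isUnit e hP]
  exact linearIndependent_iff_card_eq_finrank_span.1 he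

theorem CharTwo.add_self_eq_zero_of_module (F : Type*) {M : Type*} [Semiring F] [CharP F 2]
    [AddCommMonoid M] [Module F M] (x : M) : x + x = 0 := by
  rw [← two_smul F x, CharTwo.two_eq_zero, zero_smul]

def quaternionChangeMatrix {F : Type*} [Semiring F] (a t l m : F) :
    Matrix (Fin 4) (Fin 4) F :=
  !![1, 0, 0, 0; 0, 1, l, m; 0, 0, l, m; t, 0, m * a, l + m]

theorem det_quaternionChangeMatrix {F : Type*} [CommRing F] (a t l m : F) :
    (quaternionChangeMatrix a t l m).det = l ^ 2 + l * m - m ^ 2 * a := by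
  rw [det_succ_row_zero, Fin.sum_univ_four, det_fin_three]
  simp [quaternionChangeMatrix]
  ring

section Quaternion

variable {F A : Type*} [CommRing F] [Ring A] [Algebra F A] {a b t : F} {u v x : A}

theorem add_mul_self_add_self_eq [CharP F 2] (hu : u * u + u = a • 1) (hx : x * x = t • 1)
    (hux : u * x = x * (1 + u)) : (u + x) * (u + x) + (u + x) = (a + t) • (1 : A) := by
  calc (u + x) * (u + x) + (u + x) = (u * u + u) + x * x + ((x + x * u) + (x + x * u)) := by
        rw [mul_add, add_mul, add_mul, hux]; noncomm_ring
    _ = (a + t) • 1 := by rw [hu, hx, CharTwo.add_self_eq_zero_of_module F, add_zero, add_smul]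

theorem add_mul_eq_mul_one_add_add (hux : u * x = x * (1 + u)) :
    (u + x) * x = x * (1 + (u + x)) := by
  rw [add_mul, hux, ← mul_add, add_assoc]

theorem mul_self_eq_smul_add [CharP F 2] (hu : u * u + u = a • 1) : u * u = a • 1 + u := by
  rw [← hu, add_assoc, CharTwo.add_self_eq_zero_of_module F, add_zero]

theorem mul_smul_add_smul_mul_eq_mul_one_add (huv : u * v = v * (1 + u)) (l m : F) :
    u * (l • v + m • (u * v)) = (l • v + m • (u * v)) * (1 + u) := by
  rw [mul_add, add_mul, mul_smul_comm, mul_smul_comm, smul_mul_assoc, smul_mul_assoc, mul_assoc,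
    ← huv]

theorem mul_smul_add_smul_mul [CharP F 2] (hu : u * u + u = a • 1) (l m : F) :
    u * (l • v + m • (u * v)) = (m * a) • v + (l + m) • (u * v) := by
  rw [mul_add, mul_smul_comm, mul_smul_comm, ← mul_assoc, mul_self_eq_smul_add hu, add_mul,
    smul_mul_assoc, one_mul]
  match_scalars <;> ring

theorem smul_add_smul_mul_mul_self [CharP F 2] (hu : u * u + u = a • 1) (hv : v * v = b • 1)
    (huv : u * v = v * (1 + u)) (l m : F) :
    (l • v + m • (u * v)) * (l • v + m • (u * v)) =
      (l ^ 2 * b + l * m * b + m ^ 2 * (a * b)) • (1 : A) := by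
  have hvw : v * (u * v) = b • (1 + u) := by rw [huv, ← mul_assoc, hv, smul_mul_assoc, one_mul]
  have hwv : u * v * v = b • u := by rw [mul_assoc, hv, mul_smul_comm, mul_one]
  have hww : u * v * (u * v) = (a * b) • 1 := by
    nth_rw 2 [huv]
    rw [← mul_assoc, mul_assoc u, hv, mul_smul_comm, mul_one, smul_mul_assoc, mul_one_add,
      add_comm, hu, smul_smul, mul_comm]
  simp only [mul_add, add_mul, mul_smul_comm, smul_mul_assoc, smul_smul, hv, hvw, hwv, hww]
  match_scalars
  · ring
  · linear_combination (l * m * b) * CharTwo.two_eq_zero (R := F)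

end Quaternion

theorem stmt10_general (F : Type*) [Field F] [CharP F 2]
    (A : Type*) [Ring A] [Algebra F A]
    (a b : F) (u v w : A)
    (hli : LinearIndependent F ![(1 : A), u, v, w]) (hw : w = u * v)
    (hu : u * u + u = a • (1 : A)) (hv : v * v = b • (1 : A))
    (huv : u * v = v * (1 + u))
    (l m : F) (ht : l ^ 2 * b + l * m * b + m ^ 2 * (a * b) ≠ 0) :
    letI t : F := l ^ 2 * b + l * m * b + m ^ 2 * (a * b)
    letI u' : A := u + l • v + m • w
    letI v' : A := l • v + m • w
    u' * u' + u' = (a + t) • (1 : A) ∧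
    v' * v' = t • (1 : A) ∧
    u' * v' = v' * (1 + u') ∧
    LinearIndependent F ![(1 : A), u', v', u' * v'] ∧
    Submodule.span F {(1 : A), u', v', u' * v'} =
      Submodule.span F {(1 : A), u, v, w} := by
  subst hw
  set t := l ^ 2 * b + l * m * b + m ^ 2 * (a * b)
  rw [add_assoc u]
  set x := l • v + m • (u * v)
  have hux : u * x = x * (1 + u) := mul_smul_add_smul_mul_eq_mul_one_add huv l m
  have hx : x * x = t • 1 := smul_add_smul_mul_mul_self hu hv huv l m
  have hfamily : ![1, u + x, x, (u + x) * x] =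
      fun i ↦ ∑ j, quaternionChangeMatrix a t l m i j • ![1, u, v, u * v] j := by
    rw [add_mul, mul_smul_add_smul_mul hu, hx]
    ext i
    fin_cases i <;>
      simp only [quaternionChangeMatrix, Fin.sum_univ_four, of_apply, cons_val', cons_val_fin_one,
        cons_val_zero, cons_val_one, cons_val, Fin.isValue, Fin.zero_eta, Fin.mk_one,
        Fin.reduceFinMk, zero_smul, one_smul, zero_add, add_zero, x] <;> abel
  have hP : IsUnit (quaternionChangeMatrix a t l m) := by
    rw [isUnit_iff_isUnit_det, det_quaternionChangeMatrix, isUnit_iff_ne_zero]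
    contrapose! ht
    linear_combination b * ht + (b * m ^ 2 * a) * CharTwo.two_eq_zero (R := F)
  refine ⟨add_mul_self_add_self_eq hu hx hux, hx, add_mul_eq_mul_one_add_add hux, ?_, ?_⟩
  · rw [hfamily]
    exact hli.sum_smul_of_isUnit hP
  · have hspan := span_range_sum_smul_of_isUnit ![1, u, v, u * v] hP
    rw [← hfamily] at hspan
    simpa only [range_cons, range_empty, union_empty, singleton_union] using hspan

/-- Let `(1, u, v, w)` be a quaternion basis of type `[a,b)` in an `F`-algebra
`A` (char `F = 2`), and let `λ, μ ∈ F` with `t := λ²b + λμb + μ²ab ≠ 0`. Set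
`u' = u + λv + μw` and `v' = λv + μw`. Then `u'² + u' = (a+t)·1`, `v'² = t·1` and
`u'v' = v'(1 + u')`; in particular `(1, u', v', u'v')` is again a quaternion basis of the
quaternion algebra spanned by `(1, u, v, w)`. -/
theorem stmt10 (F : Type*) [Field F] [CharP F 2]
    (A : Type*) [Ring A] [Algebra F A]
    (a b : F) (hb : b ≠ 0) (u v w : A)
    (hli : LinearIndependent F ![(1 : A), u, v, w]) (hw : w = u * v)
    (hu : u * u + u = a • (1 : A)) (hv : v * v = b • (1 : A))
    (huv : u * v = v * (1 + u))
    (l m : F) (ht : l ^ 2 * b + l * m * b + m ^ 2 * (a * b) ≠ 0) :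
    letI t : F := l ^ 2 * b + l * m * b + m ^ 2 * (a * b)
    letI u' : A := u + l • v + m • w
    letI v' : A := l • v + m • w
    u' * u' + u' = (a + t) • (1 : A) ∧
    v' * v' = t • (1 : A) ∧
    u' * v' = v' * (1 + u') ∧
    LinearIndependent F ![(1 : A), u', v', u' * v'] ∧
    Submodule.span F {(1 : A), u', v', u' * v'} =
      Submodule.span F {(1 : A), u, v, w} :=
  stmt10_general F A a b u v w hli hw hu hv huv l m ht
end

section
/- Let (1, u, v, w) be a quaternion basis of type [a,b) in an F-algebra A, and let λ, μ ∈ F be such that s := λ²b + λμb + μ²ab ≠ 0. Set v' = λv + μw. Then uv' + v'u = v' (equivalently uv' = v'(1 + u)) and v'² = s·1; in particular (1, u, v', uv') is again a quaternion basis, of type [a, s), of the quaternion algebra spanned by (1, u, v, w). -/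
/-- Let `(1, u, v, w)` be a quaternion basis of type `[a,b)` in an `F`-algebra
`A` (char `F = 2`), and let `λ, μ ∈ F` with `s := λ²b + λμb + μ²ab ≠ 0`. Set
`v' = λv + μw`. Then `uv' + v'u = v'` (equivalently `uv' = v'(1 + u)`) and `v'² = s·1`; in
particular `(1, u, v', uv')` is again a quaternion basis, of type `[a, s)`, of the
quaternion algebra spanned by `(1, u, v, w)`. -/
theorem stmt11 (F : Type*) [Field F] [CharP F 2]
    (A : Type*) [Ring A] [Algebra F A]
    (a b : F) (hb : b ≠ 0) (u v w : A)
    (hli : LinearIndependent F ![(1 : A), u, v, w]) (hw : w = u * v)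
    (hu : u * u + u = a • (1 : A)) (hv : v * v = b • (1 : A))
    (huv : u * v = v * (1 + u))
    (l m : F) (hs : l ^ 2 * b + l * m * b + m ^ 2 * (a * b) ≠ 0) :
    letI s : F := l ^ 2 * b + l * m * b + m ^ 2 * (a * b)
    letI v' : A := l • v + m • w
    u * v' + v' * u = v' ∧
    u * v' = v' * (1 + u) ∧
    v' * v' = s • (1 : A) ∧
    LinearIndependent F ![(1 : A), u, v', u * v'] ∧
    Submodule.span F {(1 : A), u, v', u * v'} =
      Submodule.span F {(1 : A), u, v, w} := by
  have h2 : (2 : F) = 0 := by exact_mod_cast CharP.cast_eq_zero F 2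
  have h4 : (4 : F) = 0 := by rw [show (4:F) = 2 * 2 from by norm_num, h2, mul_zero]
  have hA : ∀ x : A, x + x = 0 := fun x => by
    rw [← two_smul F x, h2, zero_smul]
  subst hw
  -- basic product relations
  have p1 : u * u = a • (1:A) + u := by
    rw [eq_sub_of_add_eq hu, sub_eq_add_neg, neg_eq_of_add_eq_zero_right (hA u)]
  have p2 : u * v = v + v * u := by rw [huv, mul_add, mul_one]
  have p3 : v * u = u * v + v := by
    rw [p2, add_right_comm, hA, zero_add]
  have p4 : u * (u * v) = a • v + u * v := by
    rw [← mul_assoc, p1, add_mul, smul_mul_assoc, one_mul]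
  have p5 : (u * v) * u = a • v := by
    rw [mul_assoc, p3, mul_add, p4, add_assoc, hA, add_zero]
  have p6 : v * (u * v) = b • u + b • (1:A) := by
    rw [← mul_assoc, p3, add_mul, mul_assoc, hv, mul_smul_comm, mul_one]
  have p7 : (u * v) * v = b • u := by
    rw [mul_assoc, hv, mul_smul_comm, mul_one]
  have p8 : (u * v) * (u * v) = (a * b) • (1:A) := by
    rw [← mul_assoc, p5, smul_mul_assoc, hv, smul_smul]
  -- goal 1
  have hg1 : u * (l • v + m • (u * v)) + (l • v + m • (u * v)) * u
      = l • v + m • (u * v) := by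
    simp only [mul_add, add_mul, mul_smul_comm, smul_mul_assoc]
    rw [p3, p4, p5]
    match_scalars <;> first | ring1 | (ring_nf; simp [h2, h4])
  -- goal 2
  have hg2 : u * (l • v + m • (u * v))
      = (l • v + m • (u * v)) * (1 + u) := by
    simp only [mul_add, mul_one, add_mul, mul_smul_comm, smul_mul_assoc]
    rw [p3, p4, p5]
    match_scalars <;> first | ring1 | (ring_nf; simp [h2, h4])
  -- goal 3
  have hg3 : (l • v + m • (u * v)) * (l • v + m • (u * v))
      = (l ^ 2 * b + l * m * b + m ^ 2 * (a * b)) • (1:A) := by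
    simp only [mul_add, add_mul, mul_smul_comm, smul_mul_assoc, smul_smul]
    rw [hv, p6, p7, p8]
    match_scalars <;> first | ring1 | (ring_nf; simp [h2, h4])
  -- expansion of u * v'
  have expand : u * (l • v + m • (u * v)) = (m * a) • v + (l + m) • (u * v) := by
    simp only [mul_add, mul_smul_comm]
    rw [p4]
    match_scalars <;> first | ring1 | (ring_nf; simp [h2, h4])
  have hdet : l ^ 2 + l * m + a * m ^ 2 ≠ 0 := by
    intro h0
    apply hs
    rw [show l ^ 2 * b + l * m * b + m ^ 2 * (a * b)
        = b * (l ^ 2 + l * m + a * m ^ 2) from by ring, h0, mul_zero]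
  -- goal 4
  have hg4 : LinearIndependent F ![(1 : A), u, l • v + m • (u * v),
      u * (l • v + m • (u * v))] := by
    rw [Fintype.linearIndependent_iff] at hli ⊢
    intro g hg
    simp only [Fin.sum_univ_four, Matrix.cons_val_zero, Matrix.cons_val_one,
      Matrix.head_cons, Matrix.cons_val_two, Matrix.tail_cons,
      Matrix.cons_val_three] at hg
    rw [expand] at hg
    have hkey := hli ![g 0, g 1, g 2 * l + g 3 * (m * a), g 2 * m + g 3 * (l + m)] ?_
    · have e0 : g 0 = 0 := by simpa using hkey 0
      have e1 : g 1 = 0 := by simpa using hkey 1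
      have e2 : g 2 * l + g 3 * (m * a) = 0 := by simpa using hkey 2
      have e3 : g 2 * m + g 3 * (l + m) = 0 := by simpa using hkey 3
      have hq2 : g 2 * (l ^ 2 + l * m + a * m ^ 2) = 0 := by
        linear_combination (l + m) * e2 + m * a * e3 - g 3 * m * a * (l + m) * h2
      have hq3 : g 3 * (l ^ 2 + l * m + a * m ^ 2) = 0 := by
        linear_combination m * e2 + l * e3 - g 2 * l * m * h2
      have e2' : g 2 = 0 := (mul_eq_zero.mp hq2).resolve_right hdet
      have e3' : g 3 = 0 := (mul_eq_zero.mp hq3).resolve_right hdet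
      intro i
      fin_cases i <;> assumption
    · simp only [Fin.sum_univ_four, Matrix.cons_val_zero, Matrix.cons_val_one,
        Matrix.head_cons, Matrix.cons_val_two, Matrix.tail_cons,
        Matrix.cons_val_three]
      rw [← hg]
      match_scalars <;> ring
  -- goal 5
  have hg5 : Submodule.span F {(1 : A), u, l • v + m • (u * v),
      u * (l • v + m • (u * v))} = Submodule.span F {(1 : A), u, v, u * v} := by
    have h1S : (1:A) ∈ Submodule.span F {(1 : A), u, v, u * v} :=
      Submodule.subset_span (by simp)
    have huS : u ∈ Submodule.span F {(1 : A), u, v, u * v} :=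
      Submodule.subset_span (by simp)
    have hvS : v ∈ Submodule.span F {(1 : A), u, v, u * v} :=
      Submodule.subset_span (by simp)
    have hwS : u * v ∈ Submodule.span F {(1 : A), u, v, u * v} :=
      Submodule.subset_span (by simp)
    have h1T : (1:A) ∈ Submodule.span F {(1 : A), u, l • v + m • (u * v),
        u * (l • v + m • (u * v))} := Submodule.subset_span (by simp)
    have huT : u ∈ Submodule.span F {(1 : A), u, l • v + m • (u * v),
        u * (l • v + m • (u * v))} := Submodule.subset_span (by simp)
    have hvT : l • v + m • (u * v) ∈ Submodule.span F {(1 : A), u,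
        l • v + m • (u * v), u * (l • v + m • (u * v))} :=
      Submodule.subset_span (by simp)
    have hwT : u * (l • v + m • (u * v)) ∈ Submodule.span F {(1 : A), u,
        l • v + m • (u * v), u * (l • v + m • (u * v))} :=
      Submodule.subset_span (by simp)
    apply le_antisymm
    · rw [Submodule.span_le]
      rintro x hx
      simp only [Set.mem_insert_iff, Set.mem_singleton_iff] at hx
      rcases hx with rfl | rfl | rfl | rfl
      · exact h1S
      · exact huS
      · exact Submodule.add_mem _ (Submodule.smul_mem _ _ hvS)
          (Submodule.smul_mem _ _ hwS)
      · rw [expand]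
        exact Submodule.add_mem _ (Submodule.smul_mem _ _ hvS)
          (Submodule.smul_mem _ _ hwS)
    · rw [Submodule.span_le]
      rintro x hx
      simp only [Set.mem_insert_iff, Set.mem_singleton_iff] at hx
      have idv : v = (l ^ 2 + l * m + a * m ^ 2)⁻¹ •
          ((l + m) • (l • v + m • (u * v)) + m • (u * (l • v + m • (u * v)))) := by
        rw [expand, eq_inv_smul_iff₀ hdet]
        match_scalars <;> first | ring1 | (ring_nf; simp [h2, h4])
      have idw : u * v = (l ^ 2 + l * m + a * m ^ 2)⁻¹ •
          ((m * a) • (l • v + m • (u * v)) + l • (u * (l • v + m • (u * v)))) := by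
        rw [expand, eq_inv_smul_iff₀ hdet]
        match_scalars <;> first | ring1 | (ring_nf; simp [h2, h4])
      have hvmem : v ∈ Submodule.span F {(1 : A), u, l • v + m • (u * v),
          u * (l • v + m • (u * v))} := by
        have hmem := Submodule.smul_mem _ (l ^ 2 + l * m + a * m ^ 2)⁻¹
          (Submodule.add_mem _ (Submodule.smul_mem _ (l + m) hvT)
            (Submodule.smul_mem _ m hwT))
        rwa [← idv] at hmem
      have hwmem : u * v ∈ Submodule.span F {(1 : A), u, l • v + m • (u * v),
          u * (l • v + m • (u * v))} := by
        have hmem := Submodule.smul_mem _ (l ^ 2 + l * m + a * m ^ 2)⁻¹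
          (Submodule.add_mem _ (Submodule.smul_mem _ (m * a) hvT)
            (Submodule.smul_mem _ l hwT))
        rwa [← idw] at hmem
      rcases hx with rfl | rfl | rfl | rfl
      · exact h1T
      · exact huT
      · exact hvmem
      · exact hwmem
  exact ⟨hg1, hg2, hg3, hg4, hg5⟩
end

section
/- Let a ∈ F and b ∈ F^×, and suppose e₁, e₂, e₃ ∈ V satisfy q(e₁) = 1, q(e₂) = a, q(e₃) = b, b_q(e₁,e₂) = 1, b_q(e₁,e₃) = 0 and b_q(e₂,e₃) = 0. In the Clifford algebra C(q), set x = ι(e₁)ι(e₂) and y = ι(e₁)ι(e₃). Then x² = x + a·1, y² = b·1, xy = y(1 + x), reverse(x) = 1 + x and reverse(y) = y. (Hence x and y generate inside the even Clifford algebra a copy of the quaternion algebra [a,b) on which the canonical involution acts as the canonical involution of [a,b) — the forward implication that if a quadratic form dominates a form similar to [1,a] ⊥ ⟨b⟩ then its even Clifford algebra with canonical involution contains ([a,b), canonical involution).) -/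
/-- let `F` be a field of characteristic 2, `q` a quadratic form on an
`F`-vector space `V`, `a ∈ F`, `b ∈ F^×`, and suppose `e₁, e₂, e₃ ∈ V` satisfy
`q(e₁) = 1`, `q(e₂) = a`, `q(e₃) = b`, `b_q(e₁,e₂) = 1`, `b_q(e₁,e₃) = 0`,
`b_q(e₂,e₃) = 0`. In the Clifford algebra `C(q)`, set `x = ι(e₁)ι(e₂)` and
`y = ι(e₁)ι(e₃)`. Then `x² = x + a·1`, `y² = b·1`, `xy = y(1+x)`,
`reverse(x) = 1 + x` and `reverse(y) = y`. -/
theorem stmt18 (F : Type*) [Field F] [CharP F 2]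
    (V : Type*) [AddCommGroup V] [Module F V] (q : QuadraticForm F V)
    (a b : F) (hb : b ≠ 0) (e₁ e₂ e₃ : V)
    (h1 : q e₁ = 1) (h2 : q e₂ = a) (h3 : q e₃ = b)
    (h12 : QuadraticMap.polar q e₁ e₂ = 1)
    (h13 : QuadraticMap.polar q e₁ e₃ = 0)
    (h23 : QuadraticMap.polar q e₂ e₃ = 0) :
    letI x : CliffordAlgebra q := CliffordAlgebra.ι q e₁ * CliffordAlgebra.ι q e₂
    letI y : CliffordAlgebra q := CliffordAlgebra.ι q e₁ * CliffordAlgebra.ι q e₃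
    x * x = x + a • (1 : CliffordAlgebra q) ∧
    y * y = b • (1 : CliffordAlgebra q) ∧
    x * y = y * (1 + x) ∧
    CliffordAlgebra.reverse x = 1 + x ∧
    CliffordAlgebra.reverse y = y := by
  have hneg : ∀ z : CliffordAlgebra q, -z = z := fun z => by
    rw [← neg_one_smul F z, CharTwo.neg_eq, one_smul]
  set i := CliffordAlgebra.ι q e₁ with hi
  set j := CliffordAlgebra.ι q e₂ with hj
  set k := CliffordAlgebra.ι q e₃ with hk
  have hii : i * i = 1 := by
    rw [hi, CliffordAlgebra.ι_sq_scalar, h1, map_one]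
  have hjj : j * j = a • 1 := by
    rw [hj, CliffordAlgebra.ι_sq_scalar, h2, Algebra.algebraMap_eq_smul_one]
  have hkk : k * k = b • 1 := by
    rw [hk, CliffordAlgebra.ι_sq_scalar, h3, Algebra.algebraMap_eq_smul_one]
  have hji : j * i = 1 + i * j := by
    have := CliffordAlgebra.ι_mul_ι_add_swap (Q := q) e₁ e₂
    rw [h12, map_one, ← hi, ← hj] at this
    rw [eq_sub_of_add_eq' this, sub_eq_add_neg, hneg]
  have hki : k * i = i * k := by
    have := CliffordAlgebra.ι_mul_ι_add_swap (Q := q) e₁ e₃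
    rw [h13, map_zero, ← hi, ← hk] at this
    rw [eq_sub_of_add_eq' this, zero_sub, hneg]
  have hkj : k * j = j * k := by
    have := CliffordAlgebra.ι_mul_ι_add_swap (Q := q) e₂ e₃
    rw [h23, map_zero, ← hj, ← hk] at this
    rw [eq_sub_of_add_eq' this, zero_sub, hneg]
  refine ⟨?_, ?_, ?_, ?_, ?_⟩
  · calc (i * j) * (i * j) = i * (j * i) * j := by noncomm_ring
      _ = i * (1 + i * j) * j := by rw [hji]
      _ = i * j + (i * i) * ((j * j)) := by noncomm_ring
      _ = i * j + a • 1 := by rw [hii, hjj, one_mul]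
  · calc (i * k) * (i * k) = i * (k * i) * k := by noncomm_ring
      _ = i * (i * k) * k := by rw [hki]
      _ = (i * i) * (k * k) := by noncomm_ring
      _ = b • 1 := by rw [hii, hkk, one_mul]
  · calc (i * j) * (i * k) = i * (j * i) * k := by noncomm_ring
      _ = i * (1 + i * j) * k := by rw [hji]
      _ = i * k + (i * i) * (j * k) := by noncomm_ring
      _ = i * k + j * k := by rw [hii, one_mul]
      _ = i * k + k * j := by rw [hkj]
      _ = i * k + (i * k) * (i * j) := by
          have h5 : (i * k) * (i * j) = k * j := by
            calc (i * k) * (i * j) = i * (k * i) * j := by noncomm_ring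
              _ = i * (i * k) * j := by rw [hki]
              _ = (i * i) * (k * j) := by noncomm_ring
              _ = k * j := by rw [hii, one_mul]
          rw [h5]
      _ = (i * k) * (1 + i * j) := by noncomm_ring
  · rw [CliffordAlgebra.reverse.map_mul, CliffordAlgebra.reverse_ι, CliffordAlgebra.reverse_ι, ← hi, ← hj]; exact hji
  · rw [CliffordAlgebra.reverse.map_mul, CliffordAlgebra.reverse_ι, CliffordAlgebra.reverse_ι, ← hi, ← hk]; exact hki
end
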